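/- arXiv:2011.08097 — 2 statements merged into one kernel-verified Lean document; each statement's English description precedes it below -/
import Mathlib

section
/- Let G=(V,E) be an r-rank hypergraph, X ⊆ V, and X' := Trim(X). Then the number of hyperedges contained in X but not in X' is at most |δ(X)|, and |δ(X')| ≤ 2|δ(X)|, where δ(S) denotes the set of hyperedges intersecting both S and V∖S. -/
open Finset

/-- Degree of a vertex: the number of hyperedges containing it. -/
def hypDeg {V : Type*} [Fintype V] [DecidableEq V]
    (E : Finset (Finset V)) (v : V) : ℕ :=
  (E.filter (fun e => v ∈ e)).card

/-- `d_X(v)`: the number of hyperedges containing `v` and contained in `X`. -/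
def hypDegIn {V : Type*} [Fintype V] [DecidableEq V]
    (E : Finset (Finset V)) (X : Finset V) (v : V) : ℕ :=
  (E.filter (fun e => v ∈ e ∧ e ⊆ X)).card

/-- `δ(S)`: the set of hyperedges intersecting both `S` and `V∖S`. -/
def cutEdges {V : Type*} [Fintype V] [DecidableEq V]
    (E : Finset (Finset V)) (S : Finset V) : Finset (Finset V) :=
  E.filter (fun e => (e ∩ S).Nonempty ∧ (e ∩ Sᶜ).Nonempty)

/-- A single trim step: remove a vertex `v ∈ X` with `d_X(v) < d(v)/(2r)`. -/
def TrimStep {V : Type*} [Fintype V] [DecidableEq V]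
    (E : Finset (Finset V)) (r : ℕ) (X Y : Finset V) : Prop :=
  ∃ v ∈ X, 2 * r * hypDegIn E X v < hypDeg E v ∧ Y = X.erase v

/-- `X'` is the result of trimming `X`. -/
def IsTrim {V : Type*} [Fintype V] [DecidableEq V]
    (E : Finset (Finset V)) (r : ℕ) (X X' : Finset V) : Prop :=
  Relation.ReflTransGen (TrimStep E r) X X' ∧
    ∀ v ∈ X', hypDeg E v ≤ 2 * r * hypDegIn E X' v

section TrimAux

variable {V : Type*} [Fintype V] [DecidableEq V]

/-- The potential `f(S) = Σ_{e ∈ δ(S)} |e ∩ S|`, written as a sum over all edges. -/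
def trimPot (E : Finset (Finset V)) (S : Finset V) : ℕ :=
  ∑ e ∈ E, if e ⊆ S then 0 else (e ∩ S).card

lemma inter_compl_nonempty_iff (e S : Finset V) :
    (e ∩ Sᶜ).Nonempty ↔ ¬ e ⊆ S := by
  constructor
  · rintro ⟨x, hx⟩ h
    simp only [mem_inter, mem_compl] at hx
    exact hx.2 (h hx.1)
  · intro h
    rw [Finset.subset_iff] at h
    push_neg at h
    obtain ⟨x, hx, hxS⟩ := h
    exact ⟨x, by simp [hx, hxS]⟩

lemma cutEdges_card_eq_sum (E : Finset (Finset V)) (S : Finset V) :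
    (cutEdges E S).card = ∑ e ∈ E, if (e ∩ S).Nonempty ∧ ¬ e ⊆ S then 1 else 0 := by
  rw [cutEdges, Finset.card_filter]
  refine Finset.sum_congr rfl fun e _ => ?_
  simp [inter_compl_nonempty_iff]

/-- `f(S) ≤ (r-1)|δ(S)|`. -/
lemma trimPot_le (E : Finset (Finset V)) (S : Finset V) (r : ℕ)
    (hrank : ∀ e ∈ E, e.card ≤ r) :
    trimPot E S ≤ (r - 1) * (cutEdges E S).card := by
  rw [cutEdges_card_eq_sum, Finset.mul_sum, trimPot]
  refine Finset.sum_le_sum fun e he => ?_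
  by_cases hs : e ⊆ S
  · simp [hs]
  rcases (e ∩ S).eq_empty_or_nonempty with hne | hne
  · simp [hs, hne]
  · rw [if_neg hs, if_pos (And.intro hne hs), mul_one]
    have h1 : (e ∩ S).card < e.card := by
      refine Finset.card_lt_card ?_
      constructor
      · exact Finset.inter_subset_left
      · intro hsub
        exact hs fun x hx => (Finset.mem_inter.mp (hsub hx)).2
    have := hrank e he
    omega

/-- The edge-counting identity: `d(v) = d_Y(v) + #{cut edges through v}`. -/
lemma deg_split (E : Finset (Finset V)) (Y : Finset V) (v : V) :
    hypDegIn E Y v + (E.filter (fun e => v ∈ e ∧ ¬ e ⊆ Y)).card = hypDeg E v := by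
  rw [hypDegIn, hypDeg]
  have h1 : E.filter (fun e => v ∈ e ∧ e ⊆ Y) = (E.filter (fun e => v ∈ e)).filter (fun e => e ⊆ Y) := by
    rw [Finset.filter_filter]
  have h2 : E.filter (fun e => v ∈ e ∧ ¬ e ⊆ Y) = (E.filter (fun e => v ∈ e)).filter (fun e => ¬ e ⊆ Y) := by
    rw [Finset.filter_filter]
  rw [h1, h2, Finset.card_filter_add_card_filter_not]

/-- One trim step: potential drop. -/
lemma trimPot_step (E : Finset (Finset V)) (r : ℕ) (hr : 2 ≤ r)
    (hrank : ∀ e ∈ E, e.card ≤ r)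
    (Y : Finset V) (v : V) (hv : v ∈ Y)
    (hdeg : 2 * r * hypDegIn E Y v < hypDeg E v) :
    trimPot E (Y.erase v) + r * hypDegIn E Y v ≤ trimPot E Y := by
  set D := hypDegIn E Y v with hD
  set C := (E.filter (fun e => v ∈ e ∧ ¬ e ⊆ Y)).card with hC
  have key : trimPot E (Y.erase v) + C ≤ trimPot E Y + (r - 1) * D := by
    rw [hD, hC, hypDegIn, Finset.card_filter, Finset.card_filter, trimPot, trimPot,
      Finset.mul_sum]
    rw [← Finset.sum_add_distrib, ← Finset.sum_add_distrib]
    refine Finset.sum_le_sum fun e he => ?_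
    by_cases hve : v ∈ e
    · by_cases hsub : e ⊆ Y
      · -- interior edge through v
        have hns : ¬ e ⊆ Y.erase v := fun h => (Finset.mem_erase.mp (h hve)).1 rfl
        have hcard : (e ∩ Y.erase v).card ≤ r - 1 := by
          have h1 : e ∩ Y.erase v ⊆ e.erase v := by
            intro x hx
            rw [Finset.mem_inter] at hx
            exact Finset.mem_erase.mpr ⟨(Finset.mem_erase.mp hx.2).1, hx.1⟩
          have h2 := Finset.card_le_card h1
          rw [Finset.card_erase_of_mem hve] at h2
          have := hrank e he
          omega
        simp only [if_neg hns, if_pos hsub, if_pos (And.intro hve hsub),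
          if_neg (fun h : v ∈ e ∧ ¬ e ⊆ Y => h.2 hsub)]
        omega
      · -- cut edge through v
        have hns : ¬ e ⊆ Y.erase v := fun h => hsub (h.trans (Finset.erase_subset v Y))
        have hcard : (e ∩ Y.erase v).card + 1 = (e ∩ Y).card := by
          have h1 : e ∩ Y.erase v = (e ∩ Y).erase v := by
            ext x
            simp only [Finset.mem_inter, Finset.mem_erase]
            tauto
          rw [h1, Finset.card_erase_of_mem (Finset.mem_inter.mpr ⟨hve, hv⟩)]
          have : v ∈ e ∩ Y := Finset.mem_inter.mpr ⟨hve, hv⟩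
          have : 0 < (e ∩ Y).card := Finset.card_pos.mpr ⟨v, this⟩
          omega
        simp only [if_neg hns, if_neg hsub, if_pos (And.intro hve hsub),
          if_neg (fun h : v ∈ e ∧ e ⊆ Y => hsub h.2)]
        omega
    · -- v ∉ e
      have h1 : e ∩ Y.erase v = e ∩ Y := by
        ext x
        simp only [Finset.mem_inter, Finset.mem_erase]
        constructor
        · rintro ⟨hx, _, hxY⟩; exact ⟨hx, hxY⟩
        · rintro ⟨hx, hxY⟩; exact ⟨hx, fun h => hve (h ▸ hx), hxY⟩
      have h2 : e ⊆ Y.erase v ↔ e ⊆ Y := by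
        constructor
        · intro h; exact h.trans (Finset.erase_subset v Y)
        · intro h x hx; exact Finset.mem_erase.mpr ⟨fun he => hve (he ▸ hx), h hx⟩
      simp only [h1, h2, if_neg (fun h : v ∈ e ∧ ¬ e ⊆ Y => hve h.1),
        if_neg (fun h : v ∈ e ∧ e ⊆ Y => hve h.1)]
      omega
  have hsplit := deg_split E Y v
  rw [← hD, ← hC] at hsplit
  -- from key, hsplit, hdeg: conclude
  obtain ⟨s, rfl⟩ : ∃ s, r = s + 2 := ⟨r - 2, by omega⟩
  have e1 : (s + 2) * D = s * D + 2 * D := by ring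
  have e2 : (s + 2 - 1) * D = s * D + D := by
    have : s + 2 - 1 = s + 1 := by omega
    rw [this]; ring
  have e3 : 2 * (s + 2) * D = 2 * (s * D) + 4 * D := by ring
  omega

/-- One trim step: cut growth. -/
lemma cutEdges_step (E : Finset (Finset V)) (Y : Finset V) (v : V) (hv : v ∈ Y) :
    (cutEdges E (Y.erase v)).card ≤ (cutEdges E Y).card + hypDegIn E Y v := by
  rw [cutEdges_card_eq_sum, cutEdges_card_eq_sum, hypDegIn, Finset.card_filter,
    ← Finset.sum_add_distrib]
  refine Finset.sum_le_sum fun e he => ?_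
  by_cases hve : v ∈ e
  · by_cases hsub : e ⊆ Y
    · have : (if v ∈ e ∧ e ⊆ Y then 1 else 0) = 1 := if_pos ⟨hve, hsub⟩
      rw [this]
      split <;> split <;> omega
    · have hns : ¬ e ⊆ Y.erase v := fun h => hsub (h.trans (Finset.erase_subset v Y))
      have hcut : (e ∩ Y).Nonempty := ⟨v, Finset.mem_inter.mpr ⟨hve, hv⟩⟩
      have hY1 : (if (e ∩ Y).Nonempty ∧ ¬ e ⊆ Y then 1 else 0) = 1 := if_pos ⟨hcut, hsub⟩
      rw [hY1]
      split <;> split <;> omega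
  · have h1 : e ∩ Y.erase v = e ∩ Y := by
      ext x
      simp only [Finset.mem_inter, Finset.mem_erase]
      constructor
      · rintro ⟨hx, _, hxY⟩; exact ⟨hx, hxY⟩
      · rintro ⟨hx, hxY⟩; exact ⟨hx, fun h => hve (h ▸ hx), hxY⟩
    have h2 : e ⊆ Y.erase v ↔ e ⊆ Y := by
      constructor
      · intro h; exact h.trans (Finset.erase_subset v Y)
      · intro h x hx; exact Finset.mem_erase.mpr ⟨fun he => hve (he ▸ hx), h hx⟩
    simp only [h1, h2, if_neg (fun h : v ∈ e ∧ e ⊆ Y => hve h.1)]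
    omega

/-- One trim step: lost-edge count growth. -/
lemma lost_step (E : Finset (Finset V)) (X Y : Finset V) (hYX : Y ⊆ X)
    (v : V) (_hv : v ∈ Y) :
    ((E.filter (fun e => e ⊆ X)) \ (E.filter (fun e => e ⊆ Y.erase v))).card =
      ((E.filter (fun e => e ⊆ X)) \ (E.filter (fun e => e ⊆ Y))).card + hypDegIn E Y v := by
  have hsd : ∀ (S : Finset V),
      (E.filter (fun e => e ⊆ X)) \ (E.filter (fun e => e ⊆ S)) =
        E.filter (fun e => e ⊆ X ∧ ¬ e ⊆ S) := by
    intro S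
    ext e
    simp only [Finset.mem_sdiff, Finset.mem_filter]
    tauto
  rw [hsd, hsd, hypDegIn, Finset.card_filter, Finset.card_filter, Finset.card_filter,
    ← Finset.sum_add_distrib]
  refine Finset.sum_congr rfl fun e he => ?_
  by_cases hsub : e ⊆ Y
  · have hX : e ⊆ X := hsub.trans hYX
    by_cases hve : v ∈ e
    · have hns : ¬ e ⊆ Y.erase v := fun h => (Finset.mem_erase.mp (h hve)).1 rfl
      simp [hX, hsub, hns, hve]
    · have h2 : e ⊆ Y.erase v := fun x hx =>
        Finset.mem_erase.mpr ⟨fun h => hve (h ▸ hx), hsub hx⟩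
      simp [hX, hsub, h2, hve]
  · have hns : ¬ e ⊆ Y.erase v := fun h => hsub (h.trans (Finset.erase_subset v Y))
    simp [hsub, hns, fun h : v ∈ e ∧ e ⊆ Y => hsub h.2]

end TrimAux

/-- If `X' = Trim(X)` in an `r`-rank hypergraph, then the number of
hyperedges contained in `X` but not in `X'` is at most `|δ(X)|`, and
`|δ(X')| ≤ 2|δ(X)|`. -/
theorem hyperedges_lost_to_trim
    {V : Type*} [Fintype V] [DecidableEq V]
    (E : Finset (Finset V)) (r : ℕ) (hr : 2 ≤ r)
    (hrank : ∀ e ∈ E, e.card ≤ r)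
    (X X' : Finset V) (hX' : IsTrim E r X X') :
    ((E.filter (fun e => e ⊆ X)) \ (E.filter (fun e => e ⊆ X'))).card ≤
        (cutEdges E X).card ∧
      (cutEdges E X').card ≤ 2 * (cutEdges E X).card := by
  obtain ⟨hchain, -⟩ := hX'
  -- invariant along the chain
  have main : X' ⊆ X ∧
      trimPot E X' + r * ((E.filter (fun e => e ⊆ X)) \ (E.filter (fun e => e ⊆ X'))).card
        ≤ trimPot E X ∧
      (cutEdges E X').card ≤ (cutEdges E X).card +
        ((E.filter (fun e => e ⊆ X)) \ (E.filter (fun e => e ⊆ X'))).card := by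
    induction hchain with
    | refl =>
      refine ⟨Finset.Subset.refl X, ?_, ?_⟩ <;> simp [Finset.sdiff_self]
    | @tail Y Z hchain hstep ih =>
      obtain ⟨hYX, hpot, hcut⟩ := ih
      obtain ⟨v, hv, hdeg, rfl⟩ := hstep
      have hlost := lost_step E X Y hYX v hv
      refine ⟨(Finset.erase_subset v Y).trans hYX, ?_, ?_⟩
      · have h1 := trimPot_step E r hr hrank Y v hv hdeg
        rw [hlost, Nat.mul_add]
        omega
      · have h2 := cutEdges_step E Y v hv
        rw [hlost]
        omega
  obtain ⟨_, hpot, hcut⟩ := main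
  have hbd := trimPot_le E X r hrank
  set L := ((E.filter (fun e => e ⊆ X)) \ (E.filter (fun e => e ⊆ X'))).card with hL
  have h1 : r * L ≤ (r - 1) * (cutEdges E X).card := by omega
  have h2 : L ≤ (cutEdges E X).card := by
    have : r * L ≤ r * (cutEdges E X).card :=
      h1.trans (Nat.mul_le_mul_right _ (by omega))
    exact Nat.le_of_mul_le_mul_left this (by omega)
  exact ⟨h2, by omega⟩
end

section
/- Let G=(V,E) be an r-rank hypergraph with p := Σ_{e∈E} |e|, and let 0 < φ ≤ 1/(r−1). Then there exists a partition {X₁,…,X_k} of V such that (1) Σᵢ |δ(Xᵢ)| = O(r·φ·p·log n), and (2) for every i and every nonempty S ⊊ Xᵢ, the number of hyperedges intersecting both S and Xᵢ∖S is at least φ·min{vol(S), vol(Xᵢ∖S)}. -/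
/-!
Split recursively along sparse cuts. If a vertex set `X` is not a `φ`-expander, it has a cut
`X = A ⊔ B` with `|E^o(A, B)| < φ · vol A`, where `A` may be taken to be the side with fewer
vertices. Charging every hyperedge of the cut to the volume of `A` at rate `φ`, a vertex is
charged only when the size of its part at least halves, i.e. at most `log₂ n` times. Hence the
hyperedges split by the final partition number at most `φ · vol V · log₂ n = φ · p · log₂ n`, and
each of them lies in `δ(Xᵢ)` for at most `r` parts `Xᵢ`.
-/

open Finset

variable {α : Type*} [DecidableEq α]

namespace Finpartition

def disjUnion {A B : Finset α} (PA : Finpartition A) (PB : Finpartition B) (h : Disjoint A B) :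
    Finpartition (A ∪ B) where
  parts := PA.parts ∪ PB.parts
  supIndep := by
    rw [supIndep_iff_pairwiseDisjoint, coe_union]
    exact PA.disjoint.union PB.disjoint fun X hX Y hY _ => h.mono (PA.le hX) (PB.le hY)
  sup_parts := by rw [sup_union, PA.sup_parts, PB.sup_parts, sup_eq_union]
  bot_notMem := by simp only [mem_union, PA.bot_notMem, PB.bot_notMem, or_self, not_false_eq_true]

lemma parts_disjUnion {A B : Finset α} (PA : Finpartition A) (PB : Finpartition B)
    (h : Disjoint A B) : (PA.disjUnion PB h).parts = PA.parts ∪ PB.parts :=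
  rfl

lemma card_filter_parts_inter_nonempty_le {X : Finset α} (P : Finpartition X) (e : Finset α) :
    #{Y ∈ P.parts | (e ∩ Y).Nonempty} ≤ #e := by
  refine card_le_card_of_surjOn P.part fun Y hY => ?_
  obtain ⟨hYP, v, hv⟩ := mem_filter.mp hY
  exact ⟨v, (mem_inter.mp hv).1, P.part_eq_of_mem hYP (mem_inter.mp hv).2⟩

lemma one_lt_card_filter_parts_inter_nonempty [Fintype α] (P : Finpartition (univ : Finset α))
    {e X : Finset α} (hX : X ∈ P.parts) (hin : (e ∩ X).Nonempty) (hout : (e ∩ Xᶜ).Nonempty) :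
    1 < #{Y ∈ P.parts | (e ∩ Y).Nonempty} := by
  obtain ⟨v, hv⟩ := hout
  obtain ⟨hve, hvX⟩ := mem_inter.mp hv
  refine one_lt_card.mpr ⟨X, mem_filter.mpr ⟨hX, hin⟩, P.part v,
    mem_filter.mpr ⟨P.part_mem.mpr (mem_univ v), v, mem_inter.mpr ⟨hve, ?_⟩⟩, ?_⟩
  · exact P.mem_part_self.mpr (mem_univ v)
  · intro hXv
    exact mem_compl.mp hvX (hXv ▸ P.mem_part_self.mpr (mem_univ v))

end Finpartition

lemma one_add_logb_two_le {a x : ℕ} (ha : 0 < a) (h : 2 * a ≤ x) :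
    1 + Real.logb 2 a ≤ Real.logb 2 x := by
  have ha' : (0 : ℝ) < a := Nat.cast_pos.mpr ha
  calc 1 + Real.logb 2 a = Real.logb 2 (2 * a) := by
        rw [Real.logb_mul two_ne_zero ha'.ne', Real.logb_self_eq_one one_lt_two]
    _ ≤ Real.logb 2 x := Real.logb_le_logb_of_le one_lt_two (by positivity) (by exact_mod_cast h)

section Hypergraph

variable (E : Finset (Finset α))

def hyperVol (S : Finset α) : ℝ :=
  ∑ v ∈ S, (#{e ∈ E | v ∈ e} : ℝ)

def edgesBetween (S T : Finset α) : Finset (Finset α) :=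
  {e ∈ E | (e ∩ S).Nonempty ∧ (e ∩ T).Nonempty}

def IsExpanderOn (φ : ℝ) (X : Finset α) : Prop :=
  ∀ S ⊆ X, S.Nonempty → (X \ S).Nonempty →
    φ * min (hyperVol E S) (hyperVol E (X \ S)) ≤ #(edgesBetween E S (X \ S))

def splitEdges {X : Finset α} (P : Finpartition X) : Finset (Finset α) :=
  {e ∈ E | 1 < #{Y ∈ P.parts | (e ∩ Y).Nonempty}}

lemma hyperVol_nonneg (S : Finset α) : 0 ≤ hyperVol E S :=
  sum_nonneg fun _ _ => Nat.cast_nonneg _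

lemma hyperVol_union {A B : Finset α} (h : Disjoint A B) :
    hyperVol E (A ∪ B) = hyperVol E A + hyperVol E B :=
  sum_union h

lemma hyperVol_univ [Fintype α] : hyperVol E univ = ∑ e ∈ E, (#e : ℝ) := by
  have h : ∑ v, #{e ∈ E | v ∈ e} = ∑ e ∈ E, #e := by
    simp only [card_filter]
    rw [sum_comm]
    exact sum_congr rfl fun e _ => by rw [← card_filter, filter_univ_mem]
  unfold hyperVol
  exact_mod_cast h

lemma edgesBetween_comm (S T : Finset α) : edgesBetween E S T = edgesBetween E T S :=
  filter_congr fun _ _ => and_comm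

lemma exists_sparse_cut_of_not_isExpanderOn {φ : ℝ} (hφ : 0 ≤ φ) {X : Finset α}
    (hX : ¬ IsExpanderOn E φ X) :
    ∃ A B : Finset α, Disjoint A B ∧ A ∪ B = X ∧ A.Nonempty ∧ B.Nonempty ∧ 2 * #A ≤ #X ∧
      (#(edgesBetween E A B) : ℝ) < φ * hyperVol E A := by
  simp only [IsExpanderOn, not_forall, not_le, exists_prop] at hX
  obtain ⟨S, hSX, hS, hT, hcut⟩ := hX
  have hcard : #(X \ S) + #S = #X := card_sdiff_add_card_eq_card hSX
  rcases le_total #S #(X \ S) with hle | hle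
  · exact ⟨S, X \ S, disjoint_sdiff, union_sdiff_of_subset hSX, hS, hT, by omega,
      hcut.trans_le (mul_le_mul_of_nonneg_left (min_le_left _ _) hφ)⟩
  · refine ⟨X \ S, S, sdiff_disjoint, sdiff_union_of_subset hSX, hT, hS, by omega, ?_⟩
    rw [edgesBetween_comm]
    exact hcut.trans_le (mul_le_mul_of_nonneg_left (min_le_right _ _) hφ)

lemma splitEdges_top (X : Finset α) : splitEdges E (⊤ : Finpartition X) = ∅ := by
  refine filter_false_of_mem fun e _ => not_lt.mpr ?_
  exact (card_le_card (filter_subset _ _)).trans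
    ((card_le_card (Finpartition.parts_top_subset X)).trans (card_singleton X).le)

lemma splitEdges_disjUnion_subset {A B : Finset α} (PA : Finpartition A) (PB : Finpartition B)
    (h : Disjoint A B) :
    splitEdges E (PA.disjUnion PB h) ⊆ edgesBetween E A B ∪ splitEdges E PA ∪ splitEdges E PB := by
  intro e he
  obtain ⟨heE, hsplit⟩ := mem_filter.mp he
  rw [Finpartition.parts_disjUnion, filter_union] at hsplit
  obtain ⟨Y, hY, Z, hZ, hYZ⟩ := one_lt_card.mp hsplit
  have meets {X W : Finset α} (P : Finpartition X) (hW : W ∈ P.parts ∧ (e ∩ W).Nonempty) :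
      (e ∩ X).Nonempty :=
    hW.2.mono (inter_subset_inter_left (P.le hW.1))
  simp only [edgesBetween, splitEdges, mem_union, mem_filter, one_lt_card] at hY hZ ⊢
  rcases hY with hY | hY <;> rcases hZ with hZ | hZ
  · exact .inl (.inr ⟨heE, Y, hY, Z, hZ, hYZ⟩)
  · exact .inl (.inl ⟨heE, meets PA hY, meets PB hZ⟩)
  · exact .inl (.inl ⟨heE, meets PA hZ, meets PB hY⟩)
  · exact .inr ⟨heE, Y, hY, Z, hZ, hYZ⟩

lemma card_splitEdges_disjUnion_le {φ : ℝ} (hφ : 0 ≤ φ) {A B : Finset α} (h : Disjoint A B)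
    (hA : A.Nonempty) (hB : B.Nonempty) (hhalf : 2 * #A ≤ #(A ∪ B))
    (hcut : (#(edgesBetween E A B) : ℝ) ≤ φ * hyperVol E A)
    {PA : Finpartition A} {PB : Finpartition B}
    (hPA : (#(splitEdges E PA) : ℝ) ≤ φ * hyperVol E A * Real.logb 2 #A)
    (hPB : (#(splitEdges E PB) : ℝ) ≤ φ * hyperVol E B * Real.logb 2 #B) :
    (#(splitEdges E (PA.disjUnion PB h)) : ℝ) ≤
      φ * hyperVol E (A ∪ B) * Real.logb 2 #(A ∪ B) := by
  have hsplit : (#(splitEdges E (PA.disjUnion PB h)) : ℝ) ≤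
      #(edgesBetween E A B) + #(splitEdges E PA) + #(splitEdges E PB) := by
    exact_mod_cast (card_le_card (splitEdges_disjUnion_subset E PA PB h)).trans
      ((card_union_le _ _).trans (Nat.add_le_add_right (card_union_le _ _) _))
  have hlogA := one_add_logb_two_le hA.card_pos hhalf
  have hlogB : Real.logb 2 #B ≤ Real.logb 2 #(A ∪ B) :=
    Real.logb_le_logb_of_le one_lt_two (Nat.cast_pos.mpr hB.card_pos)
      (Nat.cast_le.mpr (card_le_card subset_union_right))
  have hvolA := mul_nonneg hφ (hyperVol_nonneg E A)
  have hvolB := mul_nonneg hφ (hyperVol_nonneg E B)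
  rw [hyperVol_union E h]
  calc (#(splitEdges E (PA.disjUnion PB h)) : ℝ)
      ≤ φ * hyperVol E A + φ * hyperVol E A * Real.logb 2 #A +
          φ * hyperVol E B * Real.logb 2 #B := by linarith
    _ ≤ φ * hyperVol E A * Real.logb 2 #(A ∪ B) + φ * hyperVol E B * Real.logb 2 #(A ∪ B) := by
        linarith [mul_le_mul_of_nonneg_left hlogA hvolA, mul_le_mul_of_nonneg_left hlogB hvolB]
    _ = φ * (hyperVol E A + hyperVol E B) * Real.logb 2 #(A ∪ B) := by ring

theorem exists_finpartition_isExpanderOn {φ : ℝ} (hφ : 0 ≤ φ) (X : Finset α) :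
    ∃ P : Finpartition X, (∀ Y ∈ P.parts, IsExpanderOn E φ Y) ∧
      (#(splitEdges E P) : ℝ) ≤ φ * hyperVol E X * Real.logb 2 #X := by
  induction X using Finset.strongInduction with
  | H X ih =>
  by_cases hX : IsExpanderOn E φ X
  · refine ⟨⊤, fun Y hY => ?_, ?_⟩
    · rwa [mem_singleton.mp (Finpartition.parts_top_subset X hY)]
    · rw [splitEdges_top, card_empty, Nat.cast_zero]
      exact mul_nonneg (mul_nonneg hφ (hyperVol_nonneg E X))
        (div_nonneg (Real.log_natCast_nonneg _) (Real.log_nonneg one_le_two))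
  obtain ⟨A, B, h, rfl, hA, hB, hhalf, hcut⟩ := exists_sparse_cut_of_not_isExpanderOn E hφ hX
  obtain ⟨PA, hPA, hPAsplit⟩ :=
    ih A (left_lt_sup.mpr fun hBA => hB.ne_empty (h.symm.eq_bot_of_le hBA))
  obtain ⟨PB, hPB, hPBsplit⟩ :=
    ih B (right_lt_sup.mpr fun hAB => hA.ne_empty (h.eq_bot_of_le hAB))
  refine ⟨PA.disjUnion PB h, fun Y hY => ?_, ?_⟩
  · rcases mem_union.mp hY with hY | hY
    exacts [hPA Y hY, hPB Y hY]
  · exact card_splitEdges_disjUnion_le E hφ h hA hB hhalf hcut.le hPAsplit hPBsplit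

lemma sum_card_edgesBetween_compl_le [Fintype α] {r : ℕ} (hr : ∀ e ∈ E, #e ≤ r)
    (P : Finpartition (univ : Finset α)) :
    ∑ X ∈ P.parts, #(edgesBetween E X Xᶜ) ≤ r * #(splitEdges E P) := by
  calc ∑ X ∈ P.parts, #(edgesBetween E X Xᶜ)
      = ∑ e ∈ E, #{X ∈ P.parts | (e ∩ X).Nonempty ∧ (e ∩ Xᶜ).Nonempty} := by
        simp only [edgesBetween, card_filter]
        exact sum_comm
    _ = ∑ e ∈ splitEdges E P, #{X ∈ P.parts | (e ∩ X).Nonempty ∧ (e ∩ Xᶜ).Nonempty} := by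
        refine (sum_subset (filter_subset _ _) fun e he hsplit => ?_).symm
        refine card_eq_zero.mpr (filter_eq_empty_iff.mpr fun X hX hcross => hsplit ?_)
        exact mem_filter.mpr ⟨he, P.one_lt_card_filter_parts_inter_nonempty hX hcross.1 hcross.2⟩
    _ ≤ ∑ _e ∈ splitEdges E P, r := sum_le_sum fun e he =>
        (card_le_card (monotone_filter_right _ fun _ _ h => h.1)).trans
          ((P.card_filter_parts_inter_nonempty_le e).trans (hr e (mem_filter.mp he).1))
    _ = r * #(splitEdges E P) := by rw [sum_const, smul_eq_mul, mul_comm]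

end Hypergraph

/-- Existential hypergraph expander decomposition:
There is an absolute constant `c` such that for every `r`-rank hypergraph on `n`
vertices with `p = Σ_e |e|` and every `0 < φ ≤ 1/(r−1)`, there is a partition of
the vertex set with `Σᵢ |δ(Xᵢ)| ≤ c·r·φ·p·log n` such that for every part `Xᵢ`
and nonempty `S ⊊ Xᵢ`, the number of hyperedges intersecting both `S` and
`Xᵢ∖S` is at least `φ·min{vol(S), vol(Xᵢ∖S)}`. -/
theorem hypergraph_expander_decomposition_exists :
    ∃ c : ℝ, 0 < c ∧
      ∀ (n r : ℕ) (E : Finset (Finset (Fin n))), 2 ≤ r →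
        (∀ e ∈ E, e.card ≤ r) →
        ∀ φ : ℝ, 0 < φ → φ ≤ 1 / ((r : ℝ) - 1) →
          ∃ P : Finpartition (Finset.univ : Finset (Fin n)),
            ((∑ X ∈ P.parts,
                (E.filter (fun e => (e ∩ X).Nonempty ∧ (e ∩ Xᶜ).Nonempty)).card : ℕ) : ℝ) ≤
                c * r * φ * (∑ e ∈ E, (e.card : ℝ)) * Real.log n ∧
              ∀ X ∈ P.parts, ∀ S ⊆ X, S.Nonempty → (X \ S).Nonempty →
                φ * min (∑ v ∈ S, ((E.filter (fun e => v ∈ e)).card : ℝ))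
                    (∑ v ∈ X \ S, ((E.filter (fun e => v ∈ e)).card : ℝ)) ≤
                  ((E.filter (fun e => (e ∩ S).Nonempty ∧ (e ∩ (X \ S)).Nonempty)).card : ℝ) := by
  refine ⟨1 / Real.log 2, by positivity, fun n r E _ hr φ hφ _ => ?_⟩
  obtain ⟨P, hP, hsplit⟩ := exists_finpartition_isExpanderOn E hφ.le univ
  refine ⟨P, ?_, hP⟩
  calc ((∑ X ∈ P.parts, #(edgesBetween E X Xᶜ) : ℕ) : ℝ)
      ≤ r * #(splitEdges E P) := by exact_mod_cast sum_card_edgesBetween_compl_le E hr P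
    _ ≤ r * (φ * hyperVol E univ * Real.logb 2 #(univ : Finset (Fin n))) := by gcongr
    _ = 1 / Real.log 2 * r * φ * (∑ e ∈ E, (#e : ℝ)) * Real.log n := by
        rw [hyperVol_univ, card_univ, Fintype.card_fin, Real.logb]
        ring
end
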